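/- If W is a standard normal random variable and ζ is an independent Gamma(2,1) random variable (density z·e^{-z} on (0,∞)), then the distribution of |W·ζ| has density ρ(c) = √(2/π)·∫₀^∞ exp(-z - c²/(2z²)) dz with respect to Lebesgue measure on (0,∞). -/

import Mathlib

open MeasureTheory ProbabilityTheory Real

open Set Function
open scoped ENNReal NNReal

/-! By independence the law of `(W, ζ)` is `N(0,1) ⊗ Γ(2,1)`. For fixed `z > 0`, `|W z|` is
half-normal with density `2 φ(c / z) / z` on `(0, ∞)`; mixing over `z` with weight `z e^{-z}`
cancels the factor `1 / z`, and Tonelli's theorem exchanges the two integrals. -/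

lemma lintegral_eq_setLIntegral_Ioi_add_comp_neg {F : ℝ → ℝ≥0∞} (hF : Measurable F) :
    ∫⁻ x, F x = ∫⁻ x in Ioi 0, (F x + F (-x)) := by
  have hneg : ∫⁻ x in Iio 0, F x = ∫⁻ x in Ioi 0, F (-x) := by
    simpa using ((Measure.measurePreserving_neg (volume : Measure ℝ)).setLIntegral_comp_preimage
      (measurableSet_Iio (a := 0)) hF).symm
  rw [lintegral_add_left hF, ← lintegral_add_compl F measurableSet_Ioi, compl_Ioi,
    setLIntegral_congr Iio_ae_eq_Iic.symm, hneg]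

lemma map_abs_withDensity {f : ℝ → ℝ≥0∞} (hf : Measurable f) :
    (volume.withDensity f).map (|·|) =
      volume.withDensity ((Ioi 0).indicator fun x => f x + f (-x)) := by
  ext s hs
  have habs : MeasurableSet ((|·|) ⁻¹' s : Set ℝ) := measurable_abs hs
  rw [Measure.map_apply measurable_abs hs, withDensity_apply _ habs, withDensity_apply _ hs,
    ← lintegral_indicator habs, lintegral_eq_setLIntegral_Ioi_add_comp_neg (hf.indicator habs),
    ← lintegral_indicator measurableSet_Ioi, ← lintegral_indicator hs]
  congr 1
  ext x
  by_cases hx : 0 < x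
  · by_cases hxs : x ∈ s <;> simp [indicator, hx, hxs, abs_of_pos]
  · simp [indicator, hx]

lemma gaussianReal_map_abs {v : ℝ≥0} (hv : v ≠ 0) :
    (gaussianReal 0 v).map (|·|) =
      volume.withDensity ((Ioi 0).indicator fun x => 2 * gaussianPDF 0 v x) := by
  rw [gaussianReal_of_var_ne_zero 0 hv, map_abs_withDensity (measurable_gaussianPDF 0 v)]
  congr 2
  ext x
  rw [two_mul]
  simp [gaussianPDF, gaussianPDFReal]

noncomputable def halfNormalPDF (σ : ℝ) : ℝ → ℝ≥0∞ :=
  (Ioi 0).indicator fun c => 2 * gaussianPDF 0 (σ ^ 2).toNNReal c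

lemma measurable_uncurry_halfNormalPDF : Measurable (uncurry halfNormalPDF) := by
  have : Measurable fun p : ℝ × ℝ => 2 * gaussianPDF 0 (p.1 ^ 2).toNNReal p.2 :=
    (measurable_uncurry_gaussianPDF.comp (measurable_const.prodMk
      ((measurable_fst.pow_const 2).real_toNNReal.prodMk measurable_snd))).const_mul 2
  exact this.indicator (measurableSet_Ioi.preimage measurable_snd)

lemma gaussianReal_map_abs_mul_const {σ : ℝ} (hσ : σ ≠ 0) :
    (gaussianReal 0 1).map (fun w => |w * σ|) = volume.withDensity (halfNormalPDF σ) := by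
  change ((gaussianReal 0 1).map ((|·|) ∘ (· * σ))) = _
  rw [← Measure.map_map measurable_abs (measurable_mul_const σ), gaussianReal_map_mul_const,
    mul_zero, mul_one, ← Real.toNNReal_of_nonneg]
  exact gaussianReal_map_abs (by simpa using hσ)

lemma map_prod_eq_withDensity_lintegral {α β γ : Type*} [MeasurableSpace α] [MeasurableSpace β]
    [MeasurableSpace γ] {μ : Measure α} {ν : Measure β} {ρ : Measure γ}
    [SFinite μ] [SFinite ν] [SFinite ρ] {f : α × β → γ} (hf : Measurable f)
    {g : β → γ → ℝ≥0∞} (hg : Measurable (uncurry g))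
    (h : ∀ᵐ y ∂ν, μ.map (fun x => f (x, y)) = ρ.withDensity (g y)) :
    (μ.prod ν).map f = ρ.withDensity fun c => ∫⁻ y, g y c ∂ν := by
  ext s hs
  rw [Measure.map_apply hf hs, Measure.prod_apply_symm (hf hs), withDensity_apply _ hs]
  calc ∫⁻ y, μ ((fun x => (x, y)) ⁻¹' (f ⁻¹' s)) ∂ν
        = ∫⁻ y, ∫⁻ c in s, g y c ∂ρ ∂ν := by
          refine lintegral_congr_ae (h.mono fun y hy => ?_)
          dsimp only
          rw [← withDensity_apply _ hs, ← hy, Measure.map_apply (by fun_prop) hs]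
          rfl
      _ = ∫⁻ c in s, ∫⁻ y, g y c ∂ν ∂ρ := lintegral_lintegral_swap hg.aemeasurable

lemma mul_exp_neg_mul_two_mul_gaussianPDFReal {z : ℝ} (hz : 0 < z) (c : ℝ) :
    z * exp (-z) * (2 * gaussianPDFReal 0 (z ^ 2).toNNReal c) =
      √(2 / π) * exp (-z - c ^ 2 / (2 * z ^ 2)) := by
  have hsqrt : √(2 * π * z ^ 2) = √2 * √π * z := by
    rw [sqrt_mul (by positivity), sqrt_mul zero_le_two, sqrt_sq hz.le]
  simp only [gaussianPDFReal, Real.coe_toNNReal _ (sq_nonneg z), hsqrt, sub_zero]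
  rw [sub_eq_add_neg, exp_add, sqrt_div zero_le_two, neg_div]
  have : 0 < √π := sqrt_pos.mpr pi_pos
  field_simp
  rw [sq_sqrt zero_le_two]

lemma integrableOn_exp_neg_sub_sq_div (c : ℝ) :
    IntegrableOn (fun z => exp (-z - c ^ 2 / (2 * z ^ 2))) (Ioi 0) := by
  refine (exp_neg_integrableOn_Ioi 0 one_pos).mono' (by fun_prop) (ae_of_all _ fun z => ?_)
  rw [norm_of_nonneg (exp_pos _).le, exp_le_exp, neg_one_mul]
  have : 0 ≤ c ^ 2 / (2 * z ^ 2) := by positivity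
  linarith

lemma measurable_ofReal_gammaTwoPDF :
    Measurable fun z => ENNReal.ofReal ((Ioi 0).indicator (fun z => z * exp (-z)) z) :=
  ((by fun_prop : Measurable fun z : ℝ => z * exp (-z)).indicator
    measurableSet_Ioi).ennreal_ofReal

lemma lintegral_halfNormalPDF_gammaTwo (c : ℝ) :
    ∫⁻ z, halfNormalPDF z c ∂(volume.withDensity fun z =>
        ENNReal.ofReal ((Ioi 0).indicator (fun z => z * exp (-z)) z)) =
      ENNReal.ofReal ((Ioi 0).indicator
        (fun c => √(2 / π) * ∫ z in Ioi 0, exp (-z - c ^ 2 / (2 * z ^ 2))) c) := by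
  have hmeas : Measurable fun z => halfNormalPDF z c :=
    measurable_uncurry_halfNormalPDF.comp (measurable_id.prodMk measurable_const)
  rw [lintegral_withDensity_eq_lintegral_mul _ measurable_ofReal_gammaTwoPDF hmeas]
  by_cases hc : 0 < c
  · calc ∫⁻ z, _
        = ∫⁻ z in Ioi 0, ENNReal.ofReal (√(2 / π) * exp (-z - c ^ 2 / (2 * z ^ 2))) := by
          rw [← lintegral_indicator measurableSet_Ioi]
          congr 1
          ext z
          by_cases hz : 0 < z
          · simp only [Pi.mul_apply, halfNormalPDF, gaussianPDF, indicator_of_mem (mem_Ioi.2 hz),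
              indicator_of_mem (mem_Ioi.2 hc)]
            rw [← mul_exp_neg_mul_two_mul_gaussianPDFReal hz,
              ENNReal.ofReal_mul (by positivity : 0 ≤ z * exp (-z)),
              ENNReal.ofReal_mul zero_le_two, ENNReal.ofReal_ofNat]
          · simp [hz]
      _ = _ := by
          rw [← ofReal_integral_eq_lintegral_ofReal
              ((integrableOn_exp_neg_sub_sq_div c).const_mul _)
              (ae_of_all _ fun z => by positivity),
            integral_const_mul, indicator_of_mem (mem_Ioi.2 hc)]
  · simp [halfNormalPDF, hc]

theorem density_of_abs_product
    {Ω : Type*} [MeasurableSpace Ω] (P : Measure Ω) [IsProbabilityMeasure P]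
    (W ζ : Ω → ℝ) (hW : Measurable W) (hζ : Measurable ζ)
    (hindep : IndepFun W ζ P)
    (hWlaw : Measure.map W P = gaussianReal 0 1)
    (hζlaw : Measure.map ζ P =
      volume.withDensity (fun z =>
        ENNReal.ofReal (Set.indicator (Set.Ioi (0 : ℝ)) (fun z => z * Real.exp (-z)) z))) :
    Measure.map (fun ω => |W ω * ζ ω|) P =
      volume.withDensity (fun c =>
        ENNReal.ofReal (Set.indicator (Set.Ioi (0 : ℝ))
          (fun c => Real.sqrt (2 / Real.pi) *
            ∫ z in Set.Ioi (0 : ℝ), Real.exp (-z - c ^ 2 / (2 * z ^ 2))) c)) := by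
  have hpair := (indepFun_iff_map_prod_eq_prod_map_map hW.aemeasurable hζ.aemeasurable).mp hindep
  have hζpos : ∀ᵐ z ∂(P.map ζ), 0 < z := by
    rw [hζlaw, ae_withDensity_iff measurable_ofReal_gammaTwoPDF]
    refine ae_of_all _ fun z hz => ?_
    by_contra h
    simp [h] at hz
  calc P.map (fun ω => |W ω * ζ ω|)
      = ((P.map W).prod (P.map ζ)).map (fun p => |p.1 * p.2|) := by
        rw [← hpair, Measure.map_map (by fun_prop) (hW.prodMk hζ)]
        rfl
    _ = volume.withDensity fun c => ∫⁻ z, halfNormalPDF z c ∂(P.map ζ) :=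
        map_prod_eq_withDensity_lintegral (by fun_prop) measurable_uncurry_halfNormalPDF
          (hζpos.mono fun z hz => hWlaw ▸ gaussianReal_map_abs_mul_const hz.ne')
    _ = _ := by
        simp_rw [hζlaw, lintegral_halfNormalPDF_gammaTwo]
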